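/- arXiv:1903.07843 — 2 statements merged into one kernel-verified Lean document; each statement's English description precedes it below -/
import Mathlib

section
/- Let n ≥ 2, 1 < p < 2, and Λ₁ ≥ Λ₀ > 0. Let a : ℝⁿ → ℝⁿ be continuous with a(0) = 0, continuously differentiable on ℝⁿ ∖ {0}, and suppose that for every ξ ∈ ℝⁿ ∖ {0} and every η ∈ ℝⁿ one has |a(ξ)| + |ξ| ‖Da(ξ)‖ ≤ Λ₁ |ξ|^{p−1} and ⟨Da(ξ) η, η⟩ ≥ Λ₀ |ξ|^{p−2} |η|². Then there exists a constant Λ̃₀ = Λ̃₀(n, Λ₀, p) > 0 such that ⟨a(ξ₁) − a(ξ₂), ξ₁ − ξ₂⟩ ≥ Λ̃₀ (|ξ₁|² + |ξ₂|²)^{(p−2)/2} |ξ₁ − ξ₂|² for all ξ₁, ξ₂ ∈ ℝⁿ with (ξ₁, ξ₂) ≠ (0,0). -/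
open Set

/-!
Along the segment `γ t = ξ₂ + t (ξ₁ - ξ₂)`, the function `t ↦ ⟪a (γ t), ξ₁ - ξ₂⟫` has derivative
`⟪Da (γ t) (ξ₁ - ξ₂), ξ₁ - ξ₂⟫ ≥ Λ₀ |γ t|^{p-2} |ξ₁ - ξ₂|²` wherever `γ t ≠ 0`, which happens for all
but at most one `t`. Since `|γ t| ≤ max (|ξ₁|, |ξ₂|) ≤ (|ξ₁|² + |ξ₂|²)^{1/2}` and `p - 2 ≤ 0`, this
derivative is at least `Λ₀ (|ξ₁|² + |ξ₂|²)^{(p-2)/2} |ξ₁ - ξ₂|²`, and the mean value inequality on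
both sides of the exceptional point gives the claim with `Λ̃₀ = Λ₀`.
-/

theorem mul_sub_le_image_sub_of_le_hasDerivAt_of_ne {f f' : ℝ → ℝ} {C a b t₀ : ℝ} (hab : a ≤ b)
    (hf : ContinuousOn f (Icc a b)) (hf' : ∀ t ∈ Ioo a b, t ≠ t₀ → HasDerivAt f (f' t) t)
    (hC : ∀ t ∈ Ioo a b, t ≠ t₀ → C ≤ f' t) :
    C * (b - a) ≤ f b - f a := by
  have avoiding : ∀ u v, a ≤ u → u ≤ v → v ≤ b → t₀ ∉ Ioo u v → C * (v - u) ≤ f v - f u := by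
    intro u v hau huv hvb ht₀
    have hsub : Ioo u v ⊆ Ioo a b := Ioo_subset_Ioo hau hvb
    have hne : ∀ t ∈ Ioo u v, t ≠ t₀ := fun t ht h => ht₀ (h ▸ ht)
    refine (convex_Icc u v).mul_sub_le_image_sub_of_le_deriv (hf.mono (Icc_subset_Icc hau hvb))
      ?_ ?_ u ⟨le_rfl, huv⟩ v ⟨huv, le_rfl⟩ huv <;> rw [interior_Icc] <;> intro t ht
    · exact (hf' t (hsub ht) (hne t ht)).differentiableAt.differentiableWithinAt
    · rw [(hf' t (hsub ht) (hne t ht)).deriv]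
      exact hC t (hsub ht) (hne t ht)
  by_cases h₀ : t₀ ∈ Ioo a b
  · have left := avoiding a t₀ le_rfl h₀.1.le h₀.2.le fun h => lt_irrefl _ h.2
    have right := avoiding t₀ b h₀.1.le h₀.2.le le_rfl fun h => lt_irrefl _ h.1
    linarith
  · exact avoiding a b le_rfl hab le_rfl h₀

section NormedSpace

variable {E : Type*} [NormedAddCommGroup E] [NormedSpace ℝ E]

theorem rpow_sum_sq_le_norm_rpow_of_mem_segment {x y z : E} (hz : z ∈ segment ℝ x y)
    (hz0 : z ≠ 0) {p : ℝ} (hp : p ≤ 2) :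
    (‖x‖ ^ 2 + ‖y‖ ^ 2) ^ ((p - 2) / 2) ≤ ‖z‖ ^ (p - 2) := by
  have hz_le : ‖z‖ ≤ √(‖x‖ ^ 2 + ‖y‖ ^ 2) :=
    ((convexOn_norm convex_univ).le_on_segment trivial trivial hz).trans <|
      max_le (Real.le_sqrt_of_sq_le (by nlinarith [sq_nonneg ‖y‖]))
        (Real.le_sqrt_of_sq_le (by nlinarith [sq_nonneg ‖x‖]))
  calc (‖x‖ ^ 2 + ‖y‖ ^ 2) ^ ((p - 2) / 2) = √(‖x‖ ^ 2 + ‖y‖ ^ 2) ^ (p - 2) := by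
        rw [Real.sqrt_eq_rpow, ← Real.rpow_mul (by positivity)]
        ring_nf
    _ ≤ ‖z‖ ^ (p - 2) := Real.rpow_le_rpow_of_nonpos (norm_pos_iff.2 hz0) hz_le (by linarith)

end NormedSpace

section InnerProductSpace

variable {E : Type*} [NormedAddCommGroup E] [InnerProductSpace ℝ E]

theorem le_inner_sub_of_le_inner_fderiv {a : E → E} {Da : E → E →L[ℝ] E} (ha : Continuous a)
    (hDa : ∀ ξ, ξ ≠ 0 → HasFDerivAt a (Da ξ) ξ) {x y : E} (hxy : x ≠ y) {C : ℝ}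
    (hC : ∀ z ∈ segment ℝ x y, z ≠ 0 → C ≤ inner ℝ (Da z (x - y)) (x - y)) :
    C ≤ inner ℝ (a x - a y) (x - y) := by
  set γ : ℝ → E := fun t => y + t • (x - y)
  have hγ_inj : Function.Injective γ := fun s t hst => by
    simpa [γ, sub_eq_zero.not.2 hxy, ← sub_smul, sub_eq_zero] using sub_eq_zero.2 hst
  obtain ⟨t₀, ht₀⟩ : ∃ t₀, ∀ t, γ t = 0 → t = t₀ := by
    by_cases h : ∃ t, γ t = 0
    · obtain ⟨t₀, h₀⟩ := h
      exact ⟨t₀, fun t ht => hγ_inj (ht.trans h₀.symm)⟩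
    · exact ⟨0, fun t ht => (h ⟨t, ht⟩).elim⟩
  have hγ_ne : ∀ t, t ≠ t₀ → γ t ≠ 0 := fun t ht h => ht (ht₀ t h)
  have hγ_cont : Continuous γ := by fun_prop
  have hderiv : ∀ t ∈ Ioo (0 : ℝ) 1, t ≠ t₀ →
      HasDerivAt (fun t => inner ℝ (a (γ t)) (x - y)) (inner ℝ (Da (γ t) (x - y)) (x - y)) t := by
    intro t _ ht
    have hγ' : HasDerivAt γ (x - y) t := by
      simpa only [one_smul] using ((hasDerivAt_id' t).smul_const (x - y)).const_add y
    simpa using ((hDa _ (hγ_ne t ht)).comp_hasDerivAt t hγ').inner ℝ (hasDerivAt_const t (x - y))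
  have hmem : ∀ t ∈ Ioo (0 : ℝ) 1, γ t ∈ segment ℝ x y := fun t ht => by
    rw [segment_symm, segment_eq_image']
    exact ⟨t, Ioo_subset_Icc_self ht, rfl⟩
  have := mul_sub_le_image_sub_of_le_hasDerivAt_of_ne zero_le_one
    ((ha.comp hγ_cont).inner continuous_const).continuousOn hderiv
    fun t ht ht' => hC (γ t) (hmem t ht) (hγ_ne t ht')
  simpa [γ, inner_sub_left] using this

end InnerProductSpace

theorem stmt9_general (n : ℕ) (p : ℝ) (hp2 : p < 2) (Λ₀ : ℝ)
    (hΛ₀ : 0 < Λ₀)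
    (a : EuclideanSpace ℝ (Fin n) → EuclideanSpace ℝ (Fin n))
    (Da : EuclideanSpace ℝ (Fin n) → (EuclideanSpace ℝ (Fin n) →L[ℝ] EuclideanSpace ℝ (Fin n)))
    (ha_cont : Continuous a)
    (ha_diff : ∀ ξ : EuclideanSpace ℝ (Fin n), ξ ≠ 0 → HasFDerivAt a (Da ξ) ξ)
    (hellip : ∀ ξ : EuclideanSpace ℝ (Fin n), ξ ≠ 0 → ∀ η : EuclideanSpace ℝ (Fin n),
      Λ₀ * ‖ξ‖ ^ (p - 2) * ‖η‖ ^ 2 ≤ (inner ℝ (Da ξ η) η : ℝ)) :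
    ∃ c : ℝ, 0 < c ∧ ∀ ξ₁ ξ₂ : EuclideanSpace ℝ (Fin n), ¬(ξ₁ = 0 ∧ ξ₂ = 0) →
      c * (‖ξ₁‖ ^ 2 + ‖ξ₂‖ ^ 2) ^ ((p - 2) / 2) * ‖ξ₁ - ξ₂‖ ^ 2 ≤
        (inner ℝ (a ξ₁ - a ξ₂) (ξ₁ - ξ₂) : ℝ) := by
  refine ⟨Λ₀, hΛ₀, fun ξ₁ ξ₂ _ => ?_⟩
  rcases eq_or_ne ξ₁ ξ₂ with rfl | hne
  · simp
  refine le_inner_sub_of_le_inner_fderiv ha_cont ha_diff hne fun z hz hz0 => ?_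
  calc Λ₀ * (‖ξ₁‖ ^ 2 + ‖ξ₂‖ ^ 2) ^ ((p - 2) / 2) * ‖ξ₁ - ξ₂‖ ^ 2
      ≤ Λ₀ * ‖z‖ ^ (p - 2) * ‖ξ₁ - ξ₂‖ ^ 2 := by
        gcongr
        exact rpow_sum_sq_le_norm_rpow_of_mem_segment hz hz0 hp2.le
    _ ≤ inner ℝ (Da z (ξ₁ - ξ₂)) (ξ₁ - ξ₂) := hellip z hz0 _

/-- Monotonicity of a singular (`1 < p < 2`) operator from growth/ellipticity conditions. -/
theorem stmt9 (n : ℕ) (hn : 2 ≤ n) (p : ℝ) (hp1 : 1 < p) (hp2 : p < 2) (Λ₀ Λ₁ : ℝ)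
    (hΛ₀ : 0 < Λ₀) (hΛ : Λ₀ ≤ Λ₁)
    (a : EuclideanSpace ℝ (Fin n) → EuclideanSpace ℝ (Fin n))
    (Da : EuclideanSpace ℝ (Fin n) → (EuclideanSpace ℝ (Fin n) →L[ℝ] EuclideanSpace ℝ (Fin n)))
    (ha_cont : Continuous a) (ha0 : a 0 = 0)
    (ha_diff : ∀ ξ : EuclideanSpace ℝ (Fin n), ξ ≠ 0 → HasFDerivAt a (Da ξ) ξ)
    (ha_cdiff : ContinuousOn Da {(0 : EuclideanSpace ℝ (Fin n))}ᶜ)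
    (hgrowth : ∀ ξ : EuclideanSpace ℝ (Fin n), ξ ≠ 0 →
      ‖a ξ‖ + ‖ξ‖ * ‖Da ξ‖ ≤ Λ₁ * ‖ξ‖ ^ (p - 1))
    (hellip : ∀ ξ : EuclideanSpace ℝ (Fin n), ξ ≠ 0 → ∀ η : EuclideanSpace ℝ (Fin n),
      Λ₀ * ‖ξ‖ ^ (p - 2) * ‖η‖ ^ 2 ≤ (inner ℝ (Da ξ η) η : ℝ)) :
    ∃ c : ℝ, 0 < c ∧ ∀ ξ₁ ξ₂ : EuclideanSpace ℝ (Fin n), ¬(ξ₁ = 0 ∧ ξ₂ = 0) →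
      c * (‖ξ₁‖ ^ 2 + ‖ξ₂‖ ^ 2) ^ ((p - 2) / 2) * ‖ξ₁ - ξ₂‖ ^ 2 ≤
        (inner ℝ (a ξ₁ - a ξ₂) (ξ₁ - ξ₂) : ℝ) :=
  stmt9_general n p hp2 Λ₀ hΛ₀ a Da ha_cont ha_diff hellip
end

section
/- Let n ≥ 2, p > 1, λ ≥ 1 and δ > 0. Let μ₀ be a finite Borel measure on ℝⁿ, let f ∈ L¹_loc(ℝ), and let μ := μ₀ ⊗ f be the Borel measure on ℝ^{n+1} whose total variation is the product measure |μ| = |μ₀| × (|f(s)| ds). If (x,t) ∈ ℝ^{n+1} satisfies M₁^λ(μ)(x,t) > δλ, then (2 M₁(μ₀)(x) · (M f)(t))^{1/(p−1)} > δ^{1/(p−1)} λ; in particular {(x,t) : M₁^λ(μ)(x,t) > δλ} ⊂ {(x,t) : (2 M₁(μ₀)(x) (M f)(t))^{1/(p−1)} > δ^{1/(p−1)} λ}. -/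
open MeasureTheory Set Metric
open scoped ENNReal

noncomputable section

/-- The intrinsic parabolic cylinder `Q_r^λ(x,t) = B_r(x) × (t − λ^{2−p} r², t + λ^{2−p} r²)`. -/
def icyl (n : ℕ) (p lam r : ℝ) (x : EuclideanSpace ℝ (Fin n)) (t : ℝ) :
    Set (EuclideanSpace ℝ (Fin n) × ℝ) :=
  ball x r ×ˢ Ioo (t - lam ^ (2 - p) * r ^ 2) (t + lam ^ (2 - p) * r ^ 2)

/-- Intrinsic fractional maximal function of order 1:
`M₁^λ(μ)(x,t) = sup_{r>0} μ(Q_r^λ(x,t))/r^{n+1}`. -/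
def ifracMax (n : ℕ) (p lam : ℝ) (μ : Measure (EuclideanSpace ℝ (Fin n) × ℝ))
    (z : EuclideanSpace ℝ (Fin n) × ℝ) : ℝ≥0∞ :=
  ⨆ (r : ℝ) (_ : 0 < r), μ (icyl n p lam r z.1 z.2) / ENNReal.ofReal (r ^ (n + 1))

/-- Spatial fractional maximal function of order 1 on `ℝⁿ`:
`M₁(μ₀)(x) = sup_{r>0} μ₀(B_r(x))/r^{n−1}`. -/
def fracMax0 (n : ℕ) (μ₀ : Measure (EuclideanSpace ℝ (Fin n)))
    (x : EuclideanSpace ℝ (Fin n)) : ℝ≥0∞ :=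
  ⨆ (r : ℝ) (_ : 0 < r), μ₀ (ball x r) / ENNReal.ofReal (r ^ (n - 1))

/-- One-dimensional Hardy–Littlewood maximal function
`M f(t) = sup_{r>0} (1/(2r)) ∫_{t−r}^{t+r} |f|`. -/
def oneMax (f : ℝ → ℝ) (t : ℝ) : ℝ≥0∞ :=
  ⨆ (r : ℝ) (_ : 0 < r),
    (∫⁻ s in Ioo (t - r) (t + r), ENNReal.ofReal |f s|) / ENNReal.ofReal (2 * r)

/-- For a product measure `μ = μ₀ ⊗ f`, `p > 1`, `λ ≥ 1`: if `M₁^λ(μ)(x,t) > δλ`, then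
`(2 M₁(μ₀)(x) · M f(t))^{1/(p−1)} > δ^{1/(p−1)} λ`. -/
theorem stmt13 (n : ℕ) (hn : 2 ≤ n) (p : ℝ) (hp : 1 < p) (lam : ℝ) (hlam : 1 ≤ lam)
    (δ : ℝ) (hδ : 0 < δ)
    (μ₀ : Measure (EuclideanSpace ℝ (Fin n))) [IsFiniteMeasure μ₀]
    (f : ℝ → ℝ) (hf : LocallyIntegrable f) :
    ∀ (x : EuclideanSpace ℝ (Fin n)) (t : ℝ),
      ENNReal.ofReal (δ * lam) <
          ifracMax n p lam
            (μ₀.prod ((volume : Measure ℝ).withDensity fun s => ENNReal.ofReal |f s|)) (x, t) →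
        ENNReal.ofReal (δ ^ (1 / (p - 1)) * lam) <
          (2 * fracMax0 n μ₀ x * oneMax f t) ^ (1 / (p - 1)) := by
  intro x t h
  have hlam0 : (0:ℝ) < lam := lt_of_lt_of_le one_pos hlam
  have hp1 : (0:ℝ) < p - 1 := sub_pos.mpr hp
  obtain ⟨r, hr⟩ := lt_iSup_iff.mp h
  obtain ⟨hr0, hlt⟩ := lt_iSup_iff.mp hr
  set L := lam ^ (2 - p) with hL
  have hL0 : 0 < L := Real.rpow_pos_of_pos hlam0 _
  set ρ := L * r ^ 2 with hρ
  have hρ0 : 0 < ρ := by positivity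
  set ν := (volume : Measure ℝ).withDensity fun s => ENNReal.ofReal |f s| with hν
  set A := μ₀ (ball x r) with hA
  set I := ∫⁻ s in Ioo (t - ρ) (t + ρ), ENNReal.ofReal |f s| with hI
  have hmeas : (μ₀.prod ν) (icyl n p lam r x t) = A * I := by
    rw [icyl, Measure.prod_prod, hν, withDensity_apply _ measurableSet_Ioo]
  have hAne : A ≠ ⊤ := measure_ne_top μ₀ _
  have hint : IntegrableOn f (Ioo (t - ρ) (t + ρ)) :=
    (hf.integrableOn_isCompact isCompact_Icc).mono_set Ioo_subset_Icc_self
  have hIne : I ≠ ⊤ := by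
    have h2 := hint.2
    rw [hasFiniteIntegral_def] at h2
    simp_rw [Real.enorm_eq_ofReal_abs] at h2
    exact h2.ne
  set A' := A.toReal with hA'
  set I' := I.toReal with hI'
  have hA'0 : 0 ≤ A' := ENNReal.toReal_nonneg
  have hI'0 : 0 ≤ I' := ENNReal.toReal_nonneg
  have hAIeq : A * I = ENNReal.ofReal (A' * I') := by
    rw [ENNReal.ofReal_mul hA'0, ENNReal.ofReal_toReal hAne, ENNReal.ofReal_toReal hIne]
  -- extract the real inequality
  have h1 : ENNReal.ofReal (δ * lam) * ENNReal.ofReal (r ^ (n + 1)) < A * I := by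
    rw [← ENNReal.lt_div_iff_mul_lt (Or.inl (by positivity)) (Or.inl ENNReal.ofReal_ne_top)]
    simpa [hmeas] using hlt
  have h2 : δ * lam * r ^ (n + 1) < A' * I' := by
    rw [hAIeq, ← ENNReal.ofReal_mul (by positivity)] at h1
    exact (ENNReal.ofReal_lt_ofReal_iff_of_nonneg (by positivity)).mp h1
  -- bound the two maximal functions from below
  have hM1 : ENNReal.ofReal (A' / r ^ (n - 1)) ≤ fracMax0 n μ₀ x := by
    have hle : A / ENNReal.ofReal (r ^ (n - 1)) ≤ fracMax0 n μ₀ x :=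
      le_iSup₂ (f := fun (r : ℝ) (_ : 0 < r) => μ₀ (ball x r) / ENNReal.ofReal (r ^ (n - 1))) r hr0
    rwa [ENNReal.ofReal_div_of_pos (by positivity), ENNReal.ofReal_toReal hAne]
  have hMf : ENNReal.ofReal (I' / (2 * ρ)) ≤ oneMax f t := by
    have hle : I / ENNReal.ofReal (2 * ρ) ≤ oneMax f t :=
      le_iSup₂ (f := fun (r : ℝ) (_ : 0 < r) =>
        (∫⁻ s in Ioo (t - r) (t + r), ENNReal.ofReal |f s|) / ENNReal.ofReal (2 * r)) ρ hρ0
    rwa [ENNReal.ofReal_div_of_pos (by positivity), ENNReal.ofReal_toReal hIne]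
  -- real algebra
  have hlamL : lam ^ (p - 1) * L = lam := by
    rw [hL, ← Real.rpow_add hlam0, show p - 1 + (2 - p) = 1 by ring, Real.rpow_one]
  have hrpow : r ^ (n - 1) * r ^ 2 = r ^ (n + 1) := by
    rw [← pow_add]; congr 1; omega
  have hreal : δ * lam ^ (p - 1) < 2 * (A' / r ^ (n - 1)) * (I' / (2 * ρ)) := by
    have hEq : 2 * (A' / r ^ (n - 1)) * (I' / (2 * ρ)) = A' * I' / (L * r ^ (n + 1)) := by
      rw [hρ, ← hrpow]; field_simp
    rw [hEq, lt_div_iff₀ (by positivity)]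
    calc δ * lam ^ (p - 1) * (L * r ^ (n + 1)) = δ * (lam ^ (p - 1) * L) * r ^ (n + 1) := by ring
      _ = δ * lam * r ^ (n + 1) := by rw [hlamL]
      _ < A' * I' := h2
  have hbig : ENNReal.ofReal (δ * lam ^ (p - 1)) < 2 * fracMax0 n μ₀ x * oneMax f t := by
    calc ENNReal.ofReal (δ * lam ^ (p - 1))
        < ENNReal.ofReal (2 * (A' / r ^ (n - 1)) * (I' / (2 * ρ))) :=
          (ENNReal.ofReal_lt_ofReal_iff_of_nonneg (by positivity)).mpr hreal
      _ = 2 * ENNReal.ofReal (A' / r ^ (n - 1)) * ENNReal.ofReal (I' / (2 * ρ)) := by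
          rw [ENNReal.ofReal_mul (by positivity), ENNReal.ofReal_mul (by norm_num),
            ENNReal.ofReal_ofNat]
      _ ≤ 2 * fracMax0 n μ₀ x * oneMax f t := mul_le_mul' (mul_le_mul' le_rfl hM1) hMf
  have hfinal := ENNReal.rpow_lt_rpow hbig (by positivity : (0:ℝ) < 1 / (p - 1))
  rwa [ENNReal.ofReal_rpow_of_pos (by positivity), Real.mul_rpow hδ.le (by positivity),
    ← Real.rpow_mul hlam0.le, mul_one_div, div_self hp1.ne', Real.rpow_one] at hfinal
end
end
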